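/- No generalized dicyclic group Dic(A,y) is CCA except ℤ₄. That is, if A is a finite abelian group of even order with an involution y, and Dic(A,y) = ⟨x, A | x² = y, x⁻¹ax = a⁻¹ for all a ∈ A⟩ is not isomorphic to ℤ₄, then Dic(A,y) is not CCA. -/

import Mathlib

/-!
Put `y = x ^ 2`. It is central, and every element of the generating set `G ∖ A` squares to `y`,
so `s⁻¹ = s y` there. Hence the swap of `x` and `x y` moves each vertex by at most a right
multiplication by `y`, which makes it a colour-preserving automorphism of `Cay(G; G ∖ A)` fixing
`1`. Were it affine, it would be a group automorphism; but it fixes any `u ∈ A ∖ {1, y}` and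
`u⁻¹ x` while moving their product `x`. If no such `u` exists then `|A| = 2` and `G ≅ ℤ₄`.
-/

/-- A map `φ` is colour-preserving for the Cayley graph `Cay(G;S)` if it sends each
edge `x — xs` (coloured `{s,s⁻¹}`) to an edge of the same colour. -/
def ColourPreserving {G : Type*} [Group G] (S : Set G) (φ : G → G) : Prop :=
  ∀ x : G, ∀ s ∈ S, φ (x * s) = φ x * s ∨ φ (x * s) = φ x * s⁻¹

/-- A map `φ` is colour-permuting for `Cay(G;S)` if it permutes the edge colours:
there is a permutation `π` of `S` with `π (s⁻¹) = (π s)⁻¹` and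
`φ(xs) ∈ {φ(x) π(s)^{±1}}`. -/
def ColourPermuting {G : Type*} [Group G] (S : Set G) (φ : G → G) : Prop :=
  ∃ π : G → G, Set.BijOn π S S ∧ (∀ s ∈ S, π s⁻¹ = (π s)⁻¹) ∧
    ∀ x : G, ∀ s ∈ S, φ (x * s) = φ x * π s ∨ φ (x * s) = φ x * (π s)⁻¹

/-- `φ : G → G` is affine if it is a group automorphism composed with a left translation. -/
def IsAffineMap {G : Type*} [Group G] (φ : G → G) : Prop :=
  ∃ (α : G ≃* G) (g : G), ∀ x, φ x = α (g * x)

/-- `G` is CCA if every colour-preserving automorphism of every connected Cayley graph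
on `G` is affine. -/
def IsCCA (G : Type*) [Group G] : Prop :=
  ∀ S : Set G, S⁻¹ = S → Subgroup.closure S = ⊤ →
    ∀ φ : Equiv.Perm G, ColourPreserving S ⇑φ → IsAffineMap ⇑φ

/-- `G` is strongly CCA if every colour-permuting automorphism of every connected
Cayley graph on `G` is affine. -/
def IsStronglyCCA (G : Type*) [Group G] : Prop :=
  ∀ S : Set G, S⁻¹ = S → Subgroup.closure S = ⊤ →
    ∀ φ : Equiv.Perm G, ColourPermuting S ⇑φ → IsAffineMap ⇑φ

theorem IsAffineMap.exists_mulEquiv_of_map_one {G : Type*} [Group G] {φ : G → G}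
    (hφ : IsAffineMap φ) (h1 : φ 1 = 1) : ∃ α : G ≃* G, ∀ g, φ g = α g := by
  obtain ⟨α, g₀, hα⟩ := hφ
  have hg₀ : g₀ = 1 := α.injective (by rw [map_one, ← mul_one g₀, ← hα, h1])
  exact ⟨α, fun g => by rw [hα, hg₀, one_mul]⟩

theorem Subgroup.closure_compl_eq_top {G : Type*} [Group G] {H : Subgroup G} (hH : H ≠ ⊤) :
    Subgroup.closure ((H : Set G)ᶜ) = ⊤ := by
  obtain ⟨x, hx⟩ : ∃ x, x ∉ H := by
    by_contra! h
    exact hH (eq_top_iff' H |>.mpr h)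
  rw [eq_top_iff']
  intro g
  by_cases hg : g ∈ H
  · rw [← mul_inv_cancel_right g x]
    exact mul_mem (subset_closure fun h => hx ((H.mul_mem_cancel_left hg).mp h))
      (subset_closure fun h => hx (inv_mem_iff.mp h))
  · exact subset_closure hg

theorem Equiv.swap_mul_apply_eq_or_eq_mul {G : Type*} [Group G] [DecidableEq G] {z : G}
    (hz : z * z = 1) (x g : G) : Equiv.swap x (x * z) g = g ∨ Equiv.swap x (x * z) g = g * z := by
  rcases eq_or_ne g x with rfl | hgx
  · exact .inr (swap_apply_left _ _)
  rcases eq_or_ne g (x * z) with rfl | hgxz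
  · exact .inr (by rw [swap_apply_right, mul_assoc, hz, mul_one])
  · exact .inl (swap_apply_of_ne_of_ne hgx hgxz)

theorem colourPreserving_of_forall_eq_or_eq_mul {G : Type*} [Group G] {S : Set G} {z : G}
    (hz : z ∈ Subgroup.center G) (hz2 : z * z = 1) (hSz : ∀ s ∈ S, s⁻¹ = s * z) {φ : G → G}
    (hφ : ∀ g, φ g = g ∨ φ g = g * z) : ColourPreserving S φ := by
  have hcomm (g : G) : z * g = g * z := (Subgroup.mem_center_iff.mp hz g).symm
  intro g s hs
  rw [hSz s hs]
  rcases hφ (g * s) with h | h <;> rcases hφ g with h' | h' <;> rw [h, h']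
  · exact .inl rfl
  · exact .inr (by rw [mul_assoc, ← mul_assoc z, hcomm, mul_assoc, hz2, mul_one])
  · exact .inr (by rw [mul_assoc])
  · exact .inl (by rw [mul_assoc, mul_assoc, hcomm])

theorem not_isCCA_of_mul_self_eq_central {G : Type*} [Group G] {S : Set G} (hS : S⁻¹ = S)
    (hgen : Subgroup.closure S = ⊤) {z : G} (hz : z ∈ Subgroup.center G) (hz1 : z ≠ 1)
    (hSz : ∀ s ∈ S, s * s = z) {x u : G} (hx : x ∈ S) (hu : u ∉ S) (hu1 : u ≠ 1)
    (huz : u ≠ z) : ¬ IsCCA G := by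
  classical
  intro hCCA
  have hx' : x⁻¹ ∈ S := by rw [← hS]; exact Set.inv_mem_inv.mpr hx
  have hz2 : z * z = 1 := by
    calc z * z = x⁻¹ * x⁻¹ * (x * x) := by rw [hSz _ hx', hSz _ hx]
      _ = 1 := by group
  have hSinv (s : G) (hs : s ∈ S) : s⁻¹ = s * z :=
    inv_eq_of_mul_eq_one_right (by rw [← mul_assoc, hSz s hs, hz2])
  set φ := Equiv.swap x (x * z)
  have hfix (g : G) (hg : g ∉ S) : φ g = g :=
    Equiv.swap_apply_of_ne_of_ne (ne_of_mem_of_not_mem hx hg).symm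
      (ne_of_mem_of_not_mem (hSinv x hx ▸ hx') hg).symm
  have h1 : (1 : G) ∉ S := fun h => hz1 (by rw [← hSz 1 h, mul_one])
  obtain ⟨α, hα⟩ := (hCCA S hS hgen φ (colourPreserving_of_forall_eq_or_eq_mul hz hz2 hSinv
    (Equiv.swap_mul_apply_eq_or_eq_mul hz2 x))).exists_mulEquiv_of_map_one (hfix 1 h1)
  have hux : φ (u⁻¹ * x) = u⁻¹ * x := by
    refine Equiv.swap_apply_of_ne_of_ne (fun h => hu1 ?_) (fun h => huz ?_)
    · simpa using h
    · rw [Subgroup.mem_center_iff.mp hz x] at h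
      rw [← inv_inv u, mul_right_cancel h, inv_eq_of_mul_eq_one_right hz2]
  have hxz : x * z = x :=
    calc x * z = φ (u * (u⁻¹ * x)) := by rw [mul_inv_cancel_left, Equiv.swap_apply_left]
      _ = x := by rw [hα, map_mul, ← hα, ← hα, hfix u hu, hux, mul_inv_cancel_left]
  exact hz1 (mul_eq_left.mp hxz)

section Dicyclic

variable {G : Type*} [Group G] {A : Subgroup G} {x : G}

theorem mul_eq_mul_inv_of_conj_eq_inv (hinv : ∀ a ∈ A, x⁻¹ * a * x = a⁻¹) {a : G}
    (ha : a ∈ A) : a * x = x * a⁻¹ := by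
  rw [← hinv a ha]; group

theorem inv_mul_mem_of_index_two (hidx : A.index = 2) (hx : x ∉ A) {g : G} (hg : g ∉ A) :
    x⁻¹ * g ∈ A :=
  (Subgroup.mul_mem_iff_of_index_two hidx).mpr (iff_of_false (inv_mem_iff.not.mpr hx) hg)

theorem sq_mem_center_of_conj_eq_inv (hinv : ∀ a ∈ A, x⁻¹ * a * x = a⁻¹)
    (hidx : A.index = 2) (hx : x ∉ A) : x ^ 2 ∈ Subgroup.center G := by
  have hA (a : G) (ha : a ∈ A) : Commute a (x ^ 2) := by
    rw [Commute, SemiconjBy, sq, ← mul_assoc, mul_eq_mul_inv_of_conj_eq_inv hinv ha, mul_assoc,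
      mul_eq_mul_inv_of_conj_eq_inv hinv (inv_mem ha), inv_inv, mul_assoc]
  refine Subgroup.mem_center_iff.mpr fun g => (?_ : Commute g (x ^ 2))
  by_cases hg : g ∈ A
  · exact hA g hg
  · rw [← mul_inv_cancel_left x g]
    exact (Commute.self_pow x 2).mul_left (hA _ (inv_mul_mem_of_index_two hidx hx hg))

theorem mul_self_eq_sq_of_conj_eq_inv (hinv : ∀ a ∈ A, x⁻¹ * a * x = a⁻¹)
    (hidx : A.index = 2) (hx : x ∉ A) {g : G} (hg : g ∉ A) : g * g = x ^ 2 := by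
  obtain ⟨a, ha, rfl⟩ : ∃ a ∈ A, x * a = g :=
    ⟨_, inv_mul_mem_of_index_two hidx hx hg, mul_inv_cancel_left x g⟩
  rw [sq, mul_assoc, ← mul_assoc a, mul_eq_mul_inv_of_conj_eq_inv hinv ha]
  group

theorem nonempty_mulEquiv_zmod_four_of_index_two (hidx : A.index = 2)
    (hA : ∀ a ∈ A, a = 1 ∨ a = x ^ 2) (hx2 : x ^ 2 ≠ 1) (hx4 : x ^ 4 = 1) :
    Nonempty (G ≃* Multiplicative (ZMod 4)) := by
  have hord : orderOf x = 4 := orderOf_eq_prime_pow (p := 2) (n := 1) (by simpa using hx2) hx4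
  have hsub : (A : Set G) ⊆ {1, x ^ 2} := hA
  have hfin : (A : Set G).Finite := (Set.toFinite _).subset hsub
  have hcardA : 0 < Nat.card A ∧ Nat.card A ≤ 2 := by
    rw [← SetLike.coe_sort_coe, Nat.card_coe_set_eq, Set.ncard_pos hfin,
      ← Set.ncard_pair (Ne.symm hx2)]
    exact ⟨⟨1, A.one_mem⟩, Set.ncard_le_ncard hsub⟩
  have hcard : Nat.card G = 4 := by
    have := orderOf_dvd_natCard x
    rw [hord, ← A.card_mul_index, hidx] at this
    rw [← A.card_mul_index, hidx]
    omega
  have : Finite G := Nat.finite_of_card_ne_zero (by omega)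
  have hcyc : IsCyclic G := isCyclic_of_orderOf_eq_card x (hord.trans hcard.symm)
  exact ⟨(hcard ▸ zmodCyclicMulEquiv hcyc).symm⟩

end Dicyclic

theorem stmt_14_general {G : Type*} [Group G] (A : Subgroup G) (x : G)
    (hidx : A.index = 2) (hx : x ∉ A) (hx2 : x ^ 2 ≠ 1)
    (hinv : ∀ a ∈ A, x⁻¹ * a * x = a⁻¹)
    (hnot4 : ¬ Nonempty (G ≃* Multiplicative (ZMod 4))) :
    ¬ IsCCA G := by
  have hsq (g : G) (hg : g ∈ (A : Set G)ᶜ) : g * g = x ^ 2 :=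
    mul_self_eq_sq_of_conj_eq_inv hinv hidx hx hg
  by_cases hA : ∀ a ∈ A, a = 1 ∨ a = x ^ 2
  · have hx4 : x ^ 4 = 1 :=
      calc x ^ 4 = (x⁻¹ * x⁻¹)⁻¹ * x ^ 2 := by group
        _ = 1 := by rw [hsq x⁻¹ (inv_mem_iff.not.mpr hx), inv_mul_cancel]
    exact absurd (nonempty_mulEquiv_zmod_four_of_index_two hidx hA hx2 hx4) hnot4
  push Not at hA
  obtain ⟨u, huA, hu1, hux2⟩ := hA
  exact not_isCCA_of_mul_self_eq_central (by rw [Set.compl_inv, inv_coe_set])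
    (Subgroup.closure_compl_eq_top (fun h => hx (by simp [h])))
    (sq_mem_center_of_conj_eq_inv hinv hidx hx) hx2 hsq hx (not_not.mpr huA) hu1 hux2

/-- No generalized dicyclic group is CCA except `ℤ₄`: if `G` has an abelian subgroup `A`
of index 2 and an element `x ∉ A` with `x² ∈ A`, `x² ≠ 1`, and `x⁻¹ax = a⁻¹` for all
`a ∈ A` (so `G = Dic(A, x²)`), and `G ≇ ℤ₄`, then `G` is not CCA. -/
theorem stmt_14 {G : Type*} [Group G] [Finite G] (A : Subgroup G) (x : G)
    (hA : ∀ a b : A, a * b = b * a) (hidx : A.index = 2) (hx : x ∉ A)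
    (hx2A : x ^ 2 ∈ A) (hx2 : x ^ 2 ≠ 1)
    (hinv : ∀ a ∈ A, x⁻¹ * a * x = a⁻¹)
    (hnot4 : ¬ Nonempty (G ≃* Multiplicative (ZMod 4))) :
    ¬ IsCCA G :=
  stmt_14_general A x hidx hx hx2 hinv hnot4
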